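/- arXiv:1709.01479 — 7 statements merged into one kernel-verified Lean document; each statement's English description precedes it below -/
import Mathlib

section
/- Let A be a left noetherian ring and M a left A-module. If for every collection {I_α}_{α∈J} of injective left A-modules the canonical map ⊕_{α∈J} Hom_A(M, I_α) → Hom_A(M, ⊕_{α∈J} I_α) is an isomorphism, then M is finitely generated. -/
/-!
Suppose the canonical map is surjective for every family of injectives, and let
`a₀ ≤ a₁ ≤ ⋯` be a chain of submodules of `M` with union `N`. Embed each `N ⧸ aₙ` into an
injective module `Eₙ`. Every `x ∈ N` lies in some `aₘ`, so the maps `N → Eₙ` assemble into a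
map `N → ⨁ Eₙ`, and over a noetherian ring `⨁ Eₙ` is injective (Baer's criterion: an ideal is
finitely generated, so its image lies in finitely many summands). An extension `M → ⨁ Eₙ` comes
from `⨁ Hom(M, Eₙ)`, hence has only finitely many nonzero components; thus `N → Eₙ` vanishes
for large `n`, i.e. `N = aₙ`. So `M` is noetherian, in particular finitely generated.
-/

universe u v

open DirectSum

/-- The canonical map `⊕_α Hom_A(M, N_α) → Hom_A(M, ⊕_α N_α)` induced by the inclusions
`N_α ↪ ⊕_α N_α` via the universal property of the direct sum. -/
noncomputable def homDirectSumCanonicalMap (A : Type u) [Ring A] {J : Type u} [DecidableEq J]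
    (M : Type u) [AddCommGroup M] [Module A M]
    (N : J → Type u) [∀ α, AddCommGroup (N α)] [∀ α, Module A (N α)] :
    (⨁ α, (M →ₗ[A] N α)) →+ (M →ₗ[A] ⨁ α, N α) :=
  DirectSum.toAddMonoid fun α =>
    { toFun := fun f => (DirectSum.lof A J N α) ∘ₗ f
      map_zero' := by ext x; simp
      map_add' := by intro f g; ext x; simp }

section

variable {A : Type u} [Ring A]

theorem component_comp_homDirectSumCanonicalMap {J : Type u} [DecidableEq J]
    {M : Type u} [AddCommGroup M] [Module A M]
    {N : J → Type u} [∀ α, AddCommGroup (N α)] [∀ α, Module A (N α)]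
    (c : ⨁ α, (M →ₗ[A] N α)) (α : J) :
    component A J N α ∘ₗ homDirectSumCanonicalMap A M N c = c α := by
  induction c using DirectSum.induction_on with
  | zero => simp
  | of β f =>
    rw [homDirectSumCanonicalMap, toAddMonoid_of]
    obtain rfl | hβ := eq_or_ne β α
    · ext x
      simp
    · ext x
      simp [component.of, of_eq_of_ne _ _ _ hβ.symm, hβ]
  | add c d hc hd => simp only [map_add, LinearMap.comp_add, hc, hd, DirectSum.add_apply]

namespace DirectSum

variable {ι : Type*} {I : ι → Type*} [∀ i, AddCommGroup (I i)] [∀ i, Module A (I i)]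

theorem exists_finset_component_comp_eq_zero {P : Type*} [AddCommGroup P] [Module A P]
    [Module.Finite A P] (g : P →ₗ[A] ⨁ i, I i) :
    ∃ S : Finset ι, ∀ i ∉ S, component A ι I i ∘ₗ g = 0 := by
  classical
  obtain ⟨n, s, hs⟩ := Module.Finite.exists_fin (R := A) (M := P)
  refine ⟨Finset.univ.sup fun k ↦ (g (s k)).support, fun i hi ↦
    LinearMap.ext_on_range hs fun k ↦ DFinsupp.notMem_support_iff.1 fun hik ↦ hi ?_⟩
  exact Finset.mem_sup.2 ⟨k, Finset.mem_univ _, hik⟩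

noncomputable def linearMapOfFiniteSupport {N : Type*} [AddCommGroup N] [Module A N]
    (φ : ∀ i, N →ₗ[A] I i) (hφ : ∀ x, {i | φ i x ≠ 0}.Finite) : N →ₗ[A] ⨁ i, I i where
  toFun x := ⟨fun i ↦ φ i x, Trunc.mk ⟨(hφ x).toFinset.val, fun i ↦ by simp [or_iff_not_imp_left]⟩⟩
  map_add' x y := DFinsupp.ext fun i ↦ map_add (φ i) x y
  map_smul' a x := DFinsupp.ext fun i ↦ map_smul (φ i) a x

theorem component_comp_linearMapOfFiniteSupport {N : Type*} [AddCommGroup N] [Module A N]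
    (φ : ∀ i, N →ₗ[A] I i) (hφ : ∀ x, {i | φ i x ≠ 0}.Finite) (i : ι) :
    component A ι I i ∘ₗ linearMapOfFiniteSupport φ hφ = φ i :=
  rfl

end DirectSum

instance Module.Injective.directSum [IsNoetherianRing A] {ι : Type*} [DecidableEq ι]
    (I : ι → Type v) [∀ i, AddCommGroup (I i)] [∀ i, Module A (I i)]
    [∀ i, Module.Injective A (I i)] [Small.{v} A] : Module.Injective A (⨁ i, I i) := by
  refine Module.Baer.injective fun J g ↦ ?_
  obtain ⟨S, hS⟩ := exists_finset_component_comp_eq_zero g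
  choose e he using fun i ↦ Module.Baer.of_injective inferInstance J (component A ι I i ∘ₗ g)
  refine ⟨∑ i ∈ S, lof A ι I i ∘ₗ e i, fun x hx ↦ DFinsupp.ext fun j ↦ ?_⟩
  simp only [LinearMap.sum_apply, LinearMap.comp_apply, DirectSum.sum_apply]
  by_cases hj : j ∈ S
  · rw [Finset.sum_eq_single_of_mem j hj fun i _ hij ↦ by
      rw [lof_eq_of, of_eq_of_ne _ _ _ hij.symm]]
    exact (lof_apply A j _).trans (he j x hx)
  · rw [Finset.sum_eq_zero fun i hi ↦ by
      rw [lof_eq_of, of_eq_of_ne _ _ _ (ne_of_mem_of_not_mem hi hj).symm]]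
    exact (LinearMap.congr_fun (hS j hj) ⟨x, hx⟩).symm

open CategoryTheory

instance {N : ModuleCat.{v} A} [Small.{v} A] :
    Module.Injective A (Injective.under N : ModuleCat.{v} A) :=
  Module.injective_module_of_injective_object A _ (inj := Injective.injective_under N)

noncomputable def Submodule.toInjectiveUnder {N : Type v} [AddCommGroup N] [Module A N]
    [Small.{v} A] (P : Submodule A N) :
    N →ₗ[A] (Injective.under (ModuleCat.of A (N ⧸ P)) : ModuleCat.{v} A) :=
  (Injective.ι (ModuleCat.of A (N ⧸ P))).hom ∘ₗ P.mkQ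

theorem Submodule.ker_toInjectiveUnder {N : Type v} [AddCommGroup N] [Module A N]
    [Small.{v} A] (P : Submodule A N) :
    LinearMap.ker P.toInjectiveUnder = P := by
  rw [toInjectiveUnder, LinearMap.ker_comp_of_ker_eq_bot, ker_mkQ]
  exact LinearMap.ker_eq_bot.2 <| (ModuleCat.mono_iff_injective _).1 inferInstance

theorem isNoetherian_of_surjective_homDirectSumCanonicalMap [IsNoetherianRing A] {M : Type u}
    [AddCommGroup M] [Module A M]
    (h : ∀ (J : Type u) [DecidableEq J] (I : J → Type u) [∀ α, AddCommGroup (I α)]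
      [∀ α, Module A (I α)], (∀ α, Module.Injective A (I α)) →
        Function.Surjective (homDirectSumCanonicalMap A M I)) :
    IsNoetherian A M := by
  classical
  refine monotone_stabilizes_iff_noetherian.1 fun a ↦ ?_
  set N := ⨆ n, a n
  let φ : ∀ k : ULift.{u} ℕ, N →ₗ[A] _ := fun k ↦ ((a k.down).comap N.subtype).toInjectiveUnder
  have ker_φ : ∀ k, LinearMap.ker (φ k) = (a k.down).comap N.subtype := fun k ↦
    Submodule.ker_toInjectiveUnder _
  have hφ : ∀ x, {k | φ k x ≠ 0}.Finite := by
    intro x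
    obtain ⟨m, hm⟩ := (Submodule.mem_iSup_of_chain a x).1 x.2
    refine ((Set.finite_Iio m).image ULift.up).subset fun k hk ↦ ⟨k.down, ?_, rfl⟩
    exact lt_of_not_ge fun hmk ↦ hk <| (ker_φ k).ge (a.mono hmk hm)
  obtain ⟨g, hg⟩ := Module.Injective.extension_property A _ _ _ N.subtype N.injective_subtype
    (linearMapOfFiniteSupport φ hφ)
  obtain ⟨c, rfl⟩ := h _ _ inferInstance g
  obtain ⟨n, hn⟩ := Finset.exists_nat_subset_range (c.support.image ULift.down)
  have hφn : φ ⟨n⟩ = 0 := by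
    rw [← component_comp_linearMapOfFiniteSupport φ hφ, ← hg, ← LinearMap.comp_assoc,
      component_comp_homDirectSumCanonicalMap, DFinsupp.notMem_support_iff.1, LinearMap.zero_comp]
    exact fun hc ↦ Finset.notMem_range_self (hn (Finset.mem_image_of_mem _ hc))
  have hN : N ≤ a n := by
    rw [← Submodule.comap_subtype_eq_top, ← ker_φ ⟨n⟩, hφn, LinearMap.ker_zero]
  exact ⟨n, fun m hnm ↦ le_antisymm (a.mono hnm) ((le_iSup a m).trans hN)⟩

end

/-- If `A` is left noetherian and `M` is such that the canonical map
`⊕_α Hom_A(M, I_α) → Hom_A(M, ⊕_α I_α)` is bijective for every family of injective left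
`A`-modules `I_α`, then `M` is finitely generated. -/
theorem finite_of_homDirectSum_bijective_on_injectives
    {A : Type u} [Ring A] [IsNoetherianRing A]
    (M : Type u) [AddCommGroup M] [Module A M]
    (h : ∀ (J : Type u) [DecidableEq J] (I : J → Type u)
      [∀ α, AddCommGroup (I α)] [∀ α, Module A (I α)],
      (∀ α, Module.Injective A (I α)) →
        Function.Bijective (homDirectSumCanonicalMap A M I)) :
    Module.Finite A M :=
  have : IsNoetherian A M :=
    isNoetherian_of_surjective_homDirectSumCanonicalMap fun J _ I _ _ hI ↦ (h J I hI).2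
  inferInstance
end

section
/- (Bass–Papp) A ring A is left noetherian if and only if every direct sum of injective left A-modules is injective. -/
/-!
If `A` is noetherian, every ideal is finitely generated, so a linear map from an ideal into a
direct sum lands in finitely many summands, and Baer's criterion can be checked summand by summand.

Conversely, given an ascending chain of ideals `f n` with union `I`, embed each `A ⧸ f n` into an
injective module `E n`. The map `x ↦ (x mod f n)ₙ` sends `I` into `⨁ n, E n`; if it extends to
`A`, it is `x ↦ x • z` for some `z` of finite support, so `I ⊆ f N` for large `N` and the chain
stabilizes.
-/

universe u v

open DirectSum Filter

namespace DirectSum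

variable {R M ι : Type*} {E : ι → Type*} [Semiring R] [AddCommMonoid M] [Module R M]
  [∀ i, AddCommMonoid (E i)] [∀ i, Module R (E i)]

noncomputable def linearMapOfCofinite (φ : ∀ i, M →ₗ[R] E i)
    (hφ : ∀ x, ∀ᶠ i in cofinite, φ i x = 0) : M →ₗ[R] ⨁ i, E i where
  toFun x := ⟨fun i => φ i x, Trunc.mk ⟨(eventually_cofinite.1 (hφ x)).toFinset.val,
    fun i => or_iff_not_imp_right.2 fun hi => (Set.Finite.mem_toFinset _).2 hi⟩⟩
  map_add' x y := by ext i; simp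
  map_smul' r x := by ext i; exact (φ i).map_smul r x

@[simp]
theorem linearMapOfCofinite_apply (φ : ∀ i, M →ₗ[R] E i) (hφ : ∀ x, ∀ᶠ i in cofinite, φ i x = 0)
    (x : M) (i : ι) : linearMapOfCofinite φ hφ x i = φ i x :=
  rfl

theorem eventually_cofinite_apply_eq_zero (v : ⨁ i, E i) : ∀ᶠ i in cofinite, v i = 0 :=
  eventually_cofinite.2 (DFinsupp.finite_support v)

theorem sum_lof_apply_eq_self [DecidableEq ι] {v : ⨁ i, E i} {S : Finset ι}
    (hv : ∀ i ∉ S, v i = 0) : ∑ i ∈ S, lof R ι E i (v i) = v := by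
  ext j
  by_cases hj : j ∈ S <;> simp [lof_eq_of, of_apply, hj, hv]

theorem exists_finset_apply_eq_zero_of_finite [Module.Finite R M] (g : M →ₗ[R] ⨁ i, E i) :
    ∃ S : Finset ι, ∀ x, ∀ i ∉ S, g x i = 0 := by
  classical
  obtain ⟨s, hs⟩ := Module.Finite.fg_top (R := R) (M := M)
  refine ⟨s.biUnion fun m => (g m).support, fun x => ?_⟩
  have hx : x ∈ Submodule.span R (s : Set M) := hs ▸ Submodule.mem_top
  induction hx using Submodule.span_induction with
  | mem m hm =>
    intro i hi
    by_contra h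
    exact hi (Finset.mem_biUnion.2 ⟨m, hm, DFinsupp.mem_support_iff.2 h⟩)
  | zero => simp
  | add x y _ _ hx hy => intro i hi; simp [hx i hi, hy i hi]
  | smul r x _ hx => intro i hi; rw [map_smul, DFinsupp.smul_apply, hx i hi, smul_zero]

end DirectSum

theorem Module.Baer.directSum {R ι : Type*} [Ring R] [IsNoetherianRing R] {E : ι → Type*}
    [∀ i, AddCommGroup (E i)] [∀ i, Module R (E i)] (h : ∀ i, Module.Baer R (E i)) :
    Module.Baer R (⨁ i, E i) := by
  classical
  intro I g
  obtain ⟨S, hS⟩ := exists_finset_apply_eq_zero_of_finite (R := R) g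
  choose g' hg' using fun i => h i I (component R ι E i ∘ₗ g)
  refine ⟨∑ i ∈ S, lof R ι E i ∘ₗ g' i, fun x hx => ?_⟩
  conv_rhs => rw [← sum_lof_apply_eq_self (R := R) (hS ⟨x, hx⟩)]
  simp only [LinearMap.sum_apply, LinearMap.comp_apply, hg' _ x hx]
  rfl

theorem Module.exists_injective_linearMap_to_injective {R : Type u} [Ring R] [Small.{v} R]
    (M : Type v) [AddCommGroup M] [Module R M] :
    ∃ (E : ModuleCat.{v} R) (e : M →ₗ[R] E), Module.Injective R E ∧ Function.Injective e := by
  have := CategoryTheory.Injective.injective_under (ModuleCat.of R M)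
  exact ⟨_, (CategoryTheory.Injective.ι (ModuleCat.of R M)).hom,
    Module.injective_module_of_injective_object _ _,
    (ModuleCat.mono_iff_injective _).1 inferInstance⟩

theorem Ideal.exists_iSup_le_of_baer_directSum {R : Type*} [Ring R] (f : ℕ →o Ideal R)
    {E : ℕ → Type*} [∀ n, AddCommGroup (E n)] [∀ n, Module R (E n)] (φ : ∀ n, R →ₗ[R] E n)
    (hφ : ∀ n, LinearMap.ker (φ n) = f n) (h : Module.Baer R (⨁ n, E n)) :
    ∃ N, ⨆ n, f n ≤ f N := by
  set I := ⨆ n, f n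
  have hvanish (x : I) : ∀ᶠ n in cofinite, (φ n ∘ₗ I.subtype) x = 0 := by
    obtain ⟨N, hN⟩ := (Submodule.mem_iSup_of_directed _ f.monotone.directed_le).1 x.2
    rw [Nat.cofinite_eq_atTop, eventually_atTop]
    exact ⟨N, fun n hn => by simpa [← LinearMap.mem_ker, hφ] using f.monotone hn hN⟩
  obtain ⟨g, hg⟩ := h I (linearMapOfCofinite _ hvanish)
  obtain ⟨N, hN⟩ := eventually_atTop.1
    (Nat.cofinite_eq_atTop ▸ eventually_cofinite_apply_eq_zero (g 1))
  refine ⟨N, fun x hx => ?_⟩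
  have hφx : φ N x = x • g 1 N := by
    rw [← DFinsupp.smul_apply, ← g.map_smul, smul_eq_mul, mul_one, hg x hx,
      linearMapOfCofinite_apply]
    rfl
  rw [← hφ, LinearMap.mem_ker, hφx, hN N le_rfl, smul_zero]

/-- The Bass–Papp theorem: a ring `A` is left noetherian if and only if every direct sum of
injective left `A`-modules is injective. -/
theorem isNoetherianRing_iff_directSum_injective (A : Type u) [Ring A] :
    IsNoetherianRing A ↔
      ∀ (J : Type u) (I : J → Type u)
        [∀ α, AddCommGroup (I α)] [∀ α, Module A (I α)],
        (∀ α, Module.Injective A (I α)) → Module.Injective A (⨁ α, I α) := by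
  refine ⟨fun _ J I _ _ hI => (Module.Baer.directSum fun α => .of_injective (hI α)).injective,
    fun H => ?_⟩
  rw [isNoetherianRing_iff, ← monotone_stabilizes_iff_noetherian]
  intro f
  choose E e hE he using fun n =>
    Module.exists_injective_linearMap_to_injective (R := A) (A ⧸ f n)
  have hbaer : Module.Baer A (⨁ n, E n) :=
    (Module.Baer.of_injective (H (ULift ℕ) (fun j => E j.down) fun j => hE j.down)).of_equiv
      (lequivCongrLeft A Equiv.ulift)
  obtain ⟨N, hN⟩ := Ideal.exists_iSup_le_of_baer_directSum f (fun n => e n ∘ₗ (f n).mkQ)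
    (fun n => by rw [LinearMap.ker_comp_of_ker_eq_bot _ (LinearMap.ker_eq_bot.2 (he n)),
      Submodule.ker_mkQ]) hbaer
  exact ⟨N, fun m hm => le_antisymm (f.monotone hm) ((le_iSup f m).trans hN)⟩
end

section
/- Let A be a commutative noetherian local ring with maximal ideal 𝔪 and residue field k, and let E = E(A, k) be the injective hull of k. Then the canonical map from the 𝔪-adic completion of A to Hom_A(E, E), sending a to multiplication by a, is an isomorphism of rings. -/
/-!
Write `s = ι 1`: it is killed by `𝔪` and lies in every nonzero submodule of `E`. By Krull's
intersection theorem, applied to `A ∙ e`, every `e : E` is then killed by some `𝔪 ^ n`, so an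
element of the completion acts on `e` through its image in `A ⧸ 𝔪 ^ n`. The action is faithful:
since `E` is injective, every nonzero element of `A ⧸ 𝔪 ^ n` is sent to `s` by some map
`A ⧸ 𝔪 ^ n → E`. It is onto because `Hom(-, E)` takes simple modules to simple modules, so
`M → Hom(Hom(M, E), E)` is onto for every `M` of finite length (induction on the length, using that
`E` is injective). For `M = A ⧸ 𝔪 ^ n` this says that every endomorphism of `E` acts on the
`𝔪 ^ n`-torsion of `E` as a scalar, and faithfulness makes these scalars a compatible system.
-/

universe u

open Ideal (torsionOf mem_torsionOf_iff)

section torsionOf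

variable {A : Type*} [CommRing A] {E : Type*} [AddCommGroup E] [Module A E]

theorem smul_eq_smul_of_le_torsionOf {J : Ideal A} {e : E} (he : J ≤ torsionOf A E e) {a b : A}
    (hab : Ideal.Quotient.mk J a = Ideal.Quotient.mk J b) : a • e = b • e := by
  rw [← sub_eq_zero, ← sub_smul]
  exact he (Ideal.Quotient.eq.mp hab)

theorem le_torsionOf_add {J : Ideal A} {e₁ e₂ : E} (h₁ : J ≤ torsionOf A E e₁)
    (h₂ : J ≤ torsionOf A E e₂) : J ≤ torsionOf A E (e₁ + e₂) := fun r hr => by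
  rw [mem_torsionOf_iff, smul_add, (mem_torsionOf_iff _ _).mp (h₁ hr),
    (mem_torsionOf_iff _ _).mp (h₂ hr), add_zero]

theorem torsionOf_le_torsionOf_apply {M : Type*} [AddCommGroup M] [Module A M] (f : M →ₗ[A] E)
    (m : M) : torsionOf A M m ≤ torsionOf A E (f m) :=
  fun r hr => by rw [mem_torsionOf_iff, ← map_smul, (mem_torsionOf_iff _ _).mp hr, map_zero]

theorem torsionOf_le_torsionOf_smul (c : A) (e : E) : torsionOf A E e ≤ torsionOf A E (c • e) :=
  torsionOf_le_torsionOf_apply (LinearMap.lsmul A E c) e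

end torsionOf

namespace AdicCompletion

variable {A : Type*} [CommRing A] {I : Ideal A} {E : Type*} [AddCommGroup E] [Module A E]

theorem smul_eq_smul_of_evalₐ_eq {x : AdicCompletion I A} {e : E} {m n : ℕ} {a b : A}
    (hm : I ^ m ≤ torsionOf A E e) (hn : I ^ n ≤ torsionOf A E e)
    (ha : Ideal.Quotient.mk _ a = evalₐ I m x) (hb : Ideal.Quotient.mk _ b = evalₐ I n x) :
    a • e = b • e := by
  obtain ⟨r, rfl⟩ := mk_surjective I A x
  have hmin : I ^ min m n ≤ torsionOf A E e := by
    rcases min_choice m n with h | h <;> rwa [h]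
  calc a • e = r.val m • e := smul_eq_smul_of_le_torsionOf hm (by rw [ha, evalₐ_mk])
    _ = r.val (min m n) • e :=
        smul_eq_smul_of_le_torsionOf hmin (AdicCompletion.Ideal.mk_eq_mk I (min_le_left m n) r)
    _ = r.val n • e :=
        (smul_eq_smul_of_le_torsionOf hmin
          (AdicCompletion.Ideal.mk_eq_mk I (min_le_right m n) r)).symm
    _ = b • e := smul_eq_smul_of_le_torsionOf hn (by rw [hb, evalₐ_mk])

variable (htors : ∀ e : E, ∃ n, I ^ n ≤ torsionOf A E e)
include htors

noncomputable def torsionSMul (x : AdicCompletion I A) (e : E) : E :=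
  Quotient.out (evalₐ I (htors e).choose x) • e

theorem torsionSMul_eq {x : AdicCompletion I A} {e : E} {n : ℕ} {a : A}
    (he : I ^ n ≤ torsionOf A E e) (ha : Ideal.Quotient.mk _ a = evalₐ I n x) :
    torsionSMul htors x e = a • e :=
  smul_eq_smul_of_evalₐ_eq (htors e).choose_spec he (Ideal.Quotient.mk_out _) ha

noncomputable def toEnd : AdicCompletion I A →ₐ[A] Module.End A E where
  toFun x :=
    { toFun := torsionSMul htors x
      map_add' e₁ e₂ := by
        obtain ⟨n₁, h₁⟩ := htors e₁
        obtain ⟨n₂, h₂⟩ := htors e₂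
        obtain ⟨a, ha⟩ := Ideal.Quotient.mk_surjective (evalₐ I (max n₁ n₂) x)
        have h₁' := (Ideal.pow_le_pow_right (le_max_left n₁ n₂)).trans h₁
        have h₂' := (Ideal.pow_le_pow_right (le_max_right n₁ n₂)).trans h₂
        rw [torsionSMul_eq htors h₁' ha, torsionSMul_eq htors h₂' ha,
          torsionSMul_eq htors (le_torsionOf_add h₁' h₂') ha, smul_add]
      map_smul' c e := by
        obtain ⟨n, hn⟩ := htors e
        obtain ⟨a, ha⟩ := Ideal.Quotient.mk_surjective (evalₐ I n x)
        rw [torsionSMul_eq htors hn ha,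
          torsionSMul_eq htors (hn.trans (torsionOf_le_torsionOf_smul c e)) ha, RingHom.id_apply,
          smul_comm] }
  map_one' := LinearMap.ext fun e => by
    obtain ⟨n, hn⟩ := htors e
    exact (torsionSMul_eq htors hn ((map_one _).trans (map_one _).symm)).trans (one_smul A e)
  map_mul' x y := LinearMap.ext fun e => by
    obtain ⟨n, hn⟩ := htors e
    obtain ⟨a, ha⟩ := Ideal.Quotient.mk_surjective (evalₐ I n x)
    obtain ⟨b, hb⟩ := Ideal.Quotient.mk_surjective (evalₐ I n y)
    have hab : Ideal.Quotient.mk _ (a * b) = evalₐ I n (x * y) := by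
      rw [map_mul, map_mul, ha, hb]
    change torsionSMul htors (x * y) e = torsionSMul htors x (torsionSMul htors y e)
    rw [torsionSMul_eq htors hn hab, torsionSMul_eq htors hn hb,
      torsionSMul_eq htors (hn.trans (torsionOf_le_torsionOf_smul b e)) ha, mul_smul]
  map_zero' := LinearMap.ext fun e => by
    obtain ⟨n, hn⟩ := htors e
    exact (torsionSMul_eq htors hn ((_root_.map_zero _).trans (_root_.map_zero _).symm)).trans
      (zero_smul A e)
  map_add' x y := LinearMap.ext fun e => by
    obtain ⟨n, hn⟩ := htors e
    obtain ⟨a, ha⟩ := Ideal.Quotient.mk_surjective (evalₐ I n x)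
    obtain ⟨b, hb⟩ := Ideal.Quotient.mk_surjective (evalₐ I n y)
    have hab : Ideal.Quotient.mk _ (a + b) = evalₐ I n (x + y) := by
      rw [map_add, map_add, ha, hb]
    change torsionSMul htors (x + y) e = torsionSMul htors x e + torsionSMul htors y e
    rw [torsionSMul_eq htors hn hab, torsionSMul_eq htors hn ha, torsionSMul_eq htors hn hb,
      add_smul]
  commutes' r := LinearMap.ext fun e => by
    obtain ⟨n, hn⟩ := htors e
    exact torsionSMul_eq htors hn ((evalₐ I n).commutes r).symm

theorem toEnd_apply_of_le_torsionOf {x : AdicCompletion I A} {e : E} {n : ℕ} {a : A}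
    (he : I ^ n ≤ torsionOf A E e) (ha : Ideal.Quotient.mk _ a = evalₐ I n x) :
    toEnd htors x e = a • e :=
  torsionSMul_eq htors he ha

theorem toEnd_injective
    (hfaithful : ∀ n a, (∀ e : E, I ^ n ≤ torsionOf A E e → a • e = 0) → a ∈ I ^ n) :
    Function.Injective (toEnd htors) := by
  refine (injective_iff_map_eq_zero _).mpr fun x hx => ext_evalₐ fun n => ?_
  obtain ⟨a, ha⟩ := Ideal.Quotient.mk_surjective (evalₐ I n x)
  have hmem : a ∈ I ^ n := hfaithful n a fun e he => by
    rw [← toEnd_apply_of_le_torsionOf htors he ha, hx, LinearMap.zero_apply]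
  rw [← ha, Ideal.Quotient.eq_zero_iff_mem.mpr hmem, _root_.map_zero]

theorem toEnd_surjective
    (hfaithful : ∀ n a, (∀ e : E, I ^ n ≤ torsionOf A E e → a • e = 0) → a ∈ I ^ n)
    (hscalar : ∀ (f : Module.End A E) n, ∃ a : A, ∀ e, I ^ n ≤ torsionOf A E e → f e = a • e) :
    Function.Surjective (toEnd htors) := by
  intro f
  choose a ha using hscalar f
  have hcauchy : ∀ n, a n ≡ a (n + 1) [SMOD (I ^ n • ⊤ : Submodule A A)] := fun n => by
    rw [SModEq.sub_mem, smul_eq_mul, Ideal.mul_top]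
    refine hfaithful n _ fun e he => ?_
    rw [sub_smul, ← ha n e he, ← ha (n + 1) e ((Ideal.pow_le_pow_right n.le_succ).trans he),
      sub_self]
  let x := AdicCauchySequence.mk I A a hcauchy
  refine ⟨mk I A x, LinearMap.ext fun e => ?_⟩
  obtain ⟨n, hn⟩ := htors e
  rw [toEnd_apply_of_le_torsionOf htors hn (a := a n) (evalₐ_mk I n x).symm, ha n e hn]

end AdicCompletion

theorem LinearMap.exists_comp_eq_of_ker_le {R M N P : Type*} [Ring R] [AddCommGroup M]
    [Module R M] [AddCommGroup N] [Module R N] [AddCommGroup P] [Module R P] {f : M →ₗ[R] N}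
    (hf : Function.Surjective f) {g : M →ₗ[R] P} (h : LinearMap.ker f ≤ LinearMap.ker g) :
    ∃ g' : N →ₗ[R] P, g' ∘ₗ f = g :=
  ⟨(LinearMap.ker f).liftQ g h ∘ₗ (f.quotKerEquivOfSurjective hf).symm,
    LinearMap.ext fun x => by simp⟩

section DoubleDual

variable {A : Type u} [CommRing A] {E : Type u} [AddCommGroup E] [Module A E]

theorem applyₗ_surjective_of_isSimpleModule (Q : Type*) [AddCommGroup Q] [Module A Q]
    [IsSimpleModule A Q] [IsSimpleModule A (Q →ₗ[A] E)]
    [IsSimpleModule A ((Q →ₗ[A] E) →ₗ[A] E)] :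
    Function.Surjective (LinearMap.applyₗ : Q →ₗ[A] (Q →ₗ[A] E) →ₗ[A] E) := by
  refine (LinearMap.bijective_of_ne_zero fun h => ?_).2
  have := IsSimpleModule.nontrivial A (Q →ₗ[A] E)
  obtain ⟨φ, hφ⟩ := exists_ne (0 : Q →ₗ[A] E)
  obtain ⟨q, hq⟩ := DFunLike.ne_iff.mp hφ
  exact hq congr($h q φ)

theorem applyₗ_surjective_of_submodule_of_quotient [Module.Injective A E]
    {M : Type u} [AddCommGroup M] [Module A M] (N : Submodule A M)
    (hN : Function.Surjective (LinearMap.applyₗ : N →ₗ[A] (N →ₗ[A] E) →ₗ[A] E))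
    (hQ : Function.Surjective (LinearMap.applyₗ : (M ⧸ N) →ₗ[A] ((M ⧸ N) →ₗ[A] E) →ₗ[A] E)) :
    Function.Surjective (LinearMap.applyₗ : M →ₗ[A] (M →ₗ[A] E) →ₗ[A] E) := by
  intro Φ
  obtain ⟨z, hz⟩ := hQ (Φ ∘ₗ N.mkQ.lcomp A E)
  obtain ⟨m, rfl⟩ := N.mkQ_surjective z
  have hrestrict : Function.Surjective (N.subtype.lcomp A E) := fun g =>
    Module.Injective.extension_property A E N M N.subtype N.injective_subtype g
  have hker : LinearMap.ker (N.subtype.lcomp A E) ≤ LinearMap.ker (Φ - LinearMap.applyₗ m) :=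
    fun φ hφ => by
      have hφN : N ≤ LinearMap.ker φ := fun x hx => congr($hφ ⟨x, hx⟩)
      have := congr($hz (N.liftQ φ hφN))
      rw [LinearMap.comp_apply, LinearMap.lcomp_apply', N.liftQ_mkQ] at this
      rw [LinearMap.mem_ker, LinearMap.sub_apply, ← this]
      simp
  obtain ⟨Ψ, hΨ⟩ := LinearMap.exists_comp_eq_of_ker_le hrestrict hker
  obtain ⟨n, rfl⟩ := hN Ψ
  refine ⟨m + n, LinearMap.ext fun φ => ?_⟩
  have hφ : φ n = Φ φ - φ m := congr($hΨ φ)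
  rw [LinearMap.applyₗ_apply_apply, map_add, hφ, add_sub_cancel]

theorem applyₗ_surjective_of_isFiniteLength [Module.Injective A E]
    (hE : ∀ (Q : Type u) [AddCommGroup Q] [Module A Q] [IsSimpleModule A Q],
      IsSimpleModule A (Q →ₗ[A] E))
    {M : Type u} [AddCommGroup M] [Module A M] (hM : IsFiniteLength A M) :
    Function.Surjective (LinearMap.applyₗ : M →ₗ[A] (M →ₗ[A] E) →ₗ[A] E) := by
  induction hM with
  | of_subsingleton =>
    exact fun Φ => ⟨0, LinearMap.ext fun φ => by rw [Subsingleton.elim φ 0]; simp⟩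
  | @of_simple_quotient M _ _ N _ _ ih =>
    have := hE (M ⧸ N)
    have := hE ((M ⧸ N) →ₗ[A] E)
    exact applyₗ_surjective_of_submodule_of_quotient _ ih (applyₗ_surjective_of_isSimpleModule _)

theorem exists_smul_eq_of_le_torsionOf [Module.Injective A E]
    (hE : ∀ (Q : Type u) [AddCommGroup Q] [Module A Q] [IsSimpleModule A Q],
      IsSimpleModule A (Q →ₗ[A] E))
    {J : Ideal A} (hJ : IsFiniteLength A (A ⧸ J)) (f : Module.End A E) :
    ∃ a : A, ∀ e : E, J ≤ torsionOf A E e → f e = a • e := by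
  obtain ⟨z, hz⟩ := applyₗ_surjective_of_isFiniteLength hE hJ
    (f ∘ₗ LinearMap.applyₗ (Submodule.Quotient.mk 1 : A ⧸ J))
  obtain ⟨a, rfl⟩ := Submodule.Quotient.mk_surjective J z
  refine ⟨a, fun e he => ?_⟩
  let φ : (A ⧸ J) →ₗ[A] E := J.liftQ (LinearMap.toSpanSingleton A E e) he
  have hφ (b : A) : φ (Submodule.Quotient.mk b) = b • e := Submodule.liftQ_apply _ _ _
  have h : φ (Submodule.Quotient.mk a) = f (φ (Submodule.Quotient.mk 1)) := congr($hz φ)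
  rw [hφ, hφ, one_smul] at h
  exact h.symm

end DoubleDual

open IsLocalRing in
theorem isFiniteLength_quotient_maximalIdeal_pow {A : Type*} [CommRing A] [IsNoetherianRing A]
    [IsLocalRing A] (n : ℕ) :
    IsFiniteLength A (A ⧸ maximalIdeal A ^ n) := by
  have : Ring.KrullDimLE 0 (A ⧸ maximalIdeal A ^ n) :=
    Ideal.krullDimLE_zero_quotient_iff_forall_minimalPrimes_isMaximal.mpr fun J hJ => by
      have := hJ.1.1
      rw [le_antisymm (le_maximalIdeal this.ne_top) (this.le_of_pow_le hJ.1.2)]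
      exact maximalIdeal.isMaximal A
  have := IsNoetherianRing.isArtinianRing_of_krullDimLE_zero (R := A ⧸ maximalIdeal A ^ n)
  exact isFiniteLength_iff_isNoetherian_isArtinian.mpr
    ⟨inferInstance, isArtinian_of_surjective_algebraMap (R := A ⧸ maximalIdeal A ^ n)
      Ideal.Quotient.mk_surjective⟩

section InjectiveHull

open IsLocalRing

variable {A : Type u} [CommRing A] [IsLocalRing A] {E : Type u} [AddCommGroup E] [Module A E]
  {s : E}

theorem mem_span_singleton_of_maximalIdeal_le_torsionOf (hs : s ≠ 0)
    (hsW : ∀ W : Submodule A E, W ≠ ⊥ → s ∈ W) {y : E} (hy : maximalIdeal A ≤ torsionOf A E y) :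
    y ∈ A ∙ s := by
  rcases eq_or_ne y 0 with rfl | hy0
  · exact zero_mem _
  obtain ⟨c, hc⟩ := Submodule.mem_span_singleton.mp
    (hsW _ (mt Submodule.span_singleton_eq_bot.mp hy0))
  have hcu : IsUnit c := notMem_maximalIdeal.mp fun hcm => hs (hc ▸ hy hcm)
  rw [← (A ∙ s).smul_mem_iff_of_isUnit hcu, hc]
  exact Submodule.mem_span_singleton_self s

theorem exists_maximalIdeal_pow_le_torsionOf [IsNoetherianRing A] (hs : s ≠ 0)
    (hsW : ∀ W : Submodule A E, W ≠ ⊥ → s ∈ W) (e : E) :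
    ∃ n, maximalIdeal A ^ n ≤ torsionOf A E e := by
  by_contra! h
  have hs_mem (n : ℕ) : s ∈ maximalIdeal A ^ n • (A ∙ e) := by
    obtain ⟨r, hr, hre⟩ := SetLike.not_le_iff_exists.mp (h n)
    refine (Submodule.span_singleton_le_iff_mem _ _).mpr ?_
      (hsW _ (mt Submodule.span_singleton_eq_bot.mp hre))
    exact Submodule.smul_mem_smul hr (Submodule.mem_span_singleton_self e)
  have hs_span : s ∈ A ∙ e := by simpa using hs_mem 0
  have hKrull := Ideal.iInf_pow_smul_eq_bot_of_isLocalRing (M := A ∙ e) (maximalIdeal A)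
    (maximalIdeal.isMaximal A).ne_top
  have : (⟨s, hs_span⟩ : A ∙ e) ∈ ⨅ n : ℕ, maximalIdeal A ^ n • (⊤ : Submodule A (A ∙ e)) :=
    Submodule.mem_iInf _ |>.mpr fun n => (Submodule.mem_smul_top_iff _ _ _).mpr (hs_mem n)
  rw [hKrull, Submodule.mem_bot] at this
  exact hs congr($this.1)

theorem exists_linearMap_apply_eq [Module.Injective A E]
    (hs𝔪 : maximalIdeal A ≤ torsionOf A E s)
    {M : Type*} [AddCommGroup M] [Module A M] {m : M} (hm : m ≠ 0) :
    ∃ φ : M →ₗ[A] E, φ m = s := by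
  have hle : torsionOf A M m ≤ torsionOf A E s :=
    (le_maximalIdeal (mt (Ideal.torsionOf_eq_top_iff A m).mp hm)).trans hs𝔪
  let i : (A ⧸ torsionOf A M m) →ₗ[A] M :=
    (torsionOf A M m).liftQ (LinearMap.toSpanSingleton A M m) le_rfl
  have hi : Function.Injective i :=
    LinearMap.ker_eq_bot.mp (Submodule.ker_liftQ_eq_bot _ _ _ le_rfl)
  obtain ⟨φ, hφ⟩ := Module.Injective.extension_property A E _ _ i hi
    ((torsionOf A M m).liftQ (LinearMap.toSpanSingleton A E s) hle)
  have hi1 : i (Submodule.Quotient.mk 1) = m := (Submodule.liftQ_apply _ _ _).trans (one_smul A m)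
  have hs1 : (torsionOf A M m).liftQ (LinearMap.toSpanSingleton A E s) hle
      (Submodule.Quotient.mk 1) = s := (Submodule.liftQ_apply _ _ _).trans (one_smul A s)
  exact ⟨φ, by rw [← hi1, ← hs1, ← hφ, LinearMap.comp_apply]⟩

theorem isSimpleModule_linearMap [Module.Injective A E] (hs : s ≠ 0)
    (hs𝔪 : maximalIdeal A ≤ torsionOf A E s) (hsW : ∀ W : Submodule A E, W ≠ ⊥ → s ∈ W)
    (Q : Type*) [AddCommGroup Q] [Module A Q] [IsSimpleModule A Q] :
    IsSimpleModule A (Q →ₗ[A] E) := by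
  have := IsSimpleModule.nontrivial A Q
  obtain ⟨q, hq⟩ := exists_ne (0 : Q)
  have hq𝔪 : maximalIdeal A ≤ torsionOf A Q q :=
    (eq_maximalIdeal (IsSimpleModule.ker_toSpanSingleton_isMaximal A hq)).ge
  have hspan := IsSimpleModule.span_singleton_eq_top A hq
  obtain ⟨φ₀, hφ₀⟩ := exists_linearMap_apply_eq hs𝔪 hq
  refine isSimpleModule_iff_toSpanSingleton_surjective.mpr
    ⟨⟨φ₀, 0, fun h => hs (by rw [← hφ₀, h, LinearMap.zero_apply])⟩, fun φ hφ ψ => ?_⟩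
  have hφq : φ q ≠ 0 := fun h =>
    hφ (LinearMap.ext_on hspan (Set.eqOn_singleton.mpr (h.trans (LinearMap.zero_apply q).symm)))
  obtain ⟨c, hc⟩ := Submodule.mem_span_singleton.mp
    (hsW _ (mt Submodule.span_singleton_eq_bot.mp hφq))
  obtain ⟨d, hd⟩ := Submodule.mem_span_singleton.mp
    (mem_span_singleton_of_maximalIdeal_le_torsionOf hs hsW
      (hq𝔪.trans (torsionOf_le_torsionOf_apply ψ q)))
  refine ⟨d * c, LinearMap.ext_on hspan (Set.eqOn_singleton.mpr ?_)⟩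
  rw [LinearMap.toSpanSingleton_apply, LinearMap.smul_apply, mul_smul, hc, hd]

theorem mem_of_forall_le_torsionOf_smul_eq_zero [Module.Injective A E] (hs : s ≠ 0)
    (hs𝔪 : maximalIdeal A ≤ torsionOf A E s) {J : Ideal A} {a : A}
    (h : ∀ e : E, J ≤ torsionOf A E e → a • e = 0) : a ∈ J := by
  by_contra ha
  obtain ⟨φ, hφ⟩ := exists_linearMap_apply_eq hs𝔪
    (m := (Submodule.Quotient.mk a : A ⧸ J)) (by rwa [Ne, Submodule.Quotient.mk_eq_zero])
  have hJ : J ≤ torsionOf A E (φ (Submodule.Quotient.mk 1)) := fun r hr => by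
    rw [mem_torsionOf_iff, ← map_smul, ← Submodule.Quotient.mk_smul, smul_eq_mul, mul_one,
      (Submodule.Quotient.mk_eq_zero J).mpr hr, map_zero]
  apply hs
  rw [← hφ, ← h _ hJ, ← map_smul, ← Submodule.Quotient.mk_smul, smul_eq_mul, mul_one]

end InjectiveHull

section ResidueField

open IsLocalRing

variable {A : Type*} [CommRing A] [IsLocalRing A] {E : Type*} [AddCommGroup E] [Module A E]
  (ι : ResidueField A →ₗ[A] E)

theorem maximalIdeal_le_torsionOf_apply_one : maximalIdeal A ≤ torsionOf A E (ι 1) :=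
  fun r hr => by
    rw [mem_torsionOf_iff, ← map_smul, Algebra.smul_def, mul_one, ResidueField.algebraMap_eq,
      (residue_eq_zero_iff r).mpr hr, map_zero]

theorem apply_one_mem_of_ne_bot
    (hess : ∀ W : Submodule A E, W ≠ ⊥ → LinearMap.range ι ⊓ W ≠ ⊥) {W : Submodule A E}
    (hW : W ≠ ⊥) : ι 1 ∈ W := by
  obtain ⟨_, ⟨⟨u, rfl⟩, hu⟩, hu0⟩ := (Submodule.ne_bot_iff _).mp (hess W hW)
  obtain ⟨c, rfl⟩ := residue_surjective u
  have hc : IsUnit c := notMem_maximalIdeal.mp fun hc =>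
    hu0 (by rw [(residue_eq_zero_iff c).mpr hc, map_zero])
  rwa [← W.smul_mem_iff_of_isUnit hc, ← map_smul, Algebra.smul_def, mul_one]

end ResidueField

/-- Matlis duality at the level of endomorphisms: if `(A, 𝔪, k)` is a commutative noetherian
local ring and `E` is an injective hull of the residue field `k`, then the canonical map
from the `𝔪`-adic completion of `A` to `Hom_A(E, E)`, sending `a` to multiplication by `a`,
is an isomorphism of rings; equivalently, `Hom_A(E,E)` is isomorphic, as an `A`-algebra, to
the `𝔪`-adic completion of `A`. -/
theorem adicCompletion_algEquiv_end_of_injective_hull_residueField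
    {A : Type u} [CommRing A] [IsNoetherianRing A] [IsLocalRing A]
    (E : Type u) [AddCommGroup E] [Module A E]
    (hinj : Module.Injective A E)
    (ι : IsLocalRing.ResidueField A →ₗ[A] E)
    (hmono : Function.Injective ι)
    (hess : ∀ W : Submodule A E, W ≠ ⊥ → LinearMap.range ι ⊓ W ≠ ⊥) :
    Nonempty (AdicCompletion (IsLocalRing.maximalIdeal A) A ≃ₐ[A] Module.End A E) := by
  have := hinj
  have hs : ι 1 ≠ 0 := (map_ne_zero_iff ι hmono).mpr one_ne_zero
  have hs𝔪 := maximalIdeal_le_torsionOf_apply_one ι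
  have hsW (W : Submodule A E) (hW : W ≠ ⊥) := apply_one_mem_of_ne_bot ι hess hW
  have htors := exists_maximalIdeal_pow_le_torsionOf hs hsW
  have hfaithful (n : ℕ) (a : A) :=
    mem_of_forall_le_torsionOf_smul_eq_zero hs hs𝔪 (J := IsLocalRing.maximalIdeal A ^ n) (a := a)
  have hscalar (f : Module.End A E) (n : ℕ) :=
    exists_smul_eq_of_le_torsionOf (isSimpleModule_linearMap hs hs𝔪 hsW)
      (isFiniteLength_quotient_maximalIdeal_pow n) f
  exact ⟨.ofBijective (AdicCompletion.toEnd htors)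
    ⟨AdicCompletion.toEnd_injective htors hfaithful,
      AdicCompletion.toEnd_surjective htors hfaithful hscalar⟩⟩
end

section
/- Let A be a commutative noetherian ring and 𝔭 a prime ideal of A. Then the indecomposable injective A-module E(A/𝔭), the injective hull of A/𝔭, is naturally an A_𝔭-module, and the localization map E(A/𝔭) → (E(A/𝔭))_𝔭 is an isomorphism. -/
universe u

/-!
Every `s ∉ 𝔭` acts injectively on `A/𝔭`, hence on its essential extension `E`, since the
kernel of `s` on `E` meets `A/𝔭` trivially. On an injective module an injective scalar is also
surjective: extending the identity along `s • ·` gives a linear map `h` with `h (s • x) = x`, and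
`h` commutes with `s`. So `E` is its own localization at `𝔭`, which yields both claims.
-/

open Function

section

variable {R M : Type*} [CommRing R] [AddCommGroup M] [Module R M]

theorem injective_smul_of_essential {N : Type*} [AddCommGroup N] [Module R N]
    (ι : N →ₗ[R] M) (hι : Injective ι)
    (hess : ∀ W : Submodule R M, W ≠ ⊥ → LinearMap.range ι ⊓ W ≠ ⊥)
    {s : R} (hs : Injective (s • · : N → N)) : Injective (s • · : M → M) := by
  suffices LinearMap.ker (LinearMap.lsmul R M s) = ⊥ by
    rwa [LinearMap.ker_eq_bot] at this
  by_contra hker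
  obtain ⟨_, ⟨⟨y, rfl⟩, hy⟩, hy0⟩ := Submodule.exists_mem_ne_zero_of_ne_bot (hess _ hker)
  have hsy : s • y = 0 := by
    refine hι ?_
    simpa only [map_smul, map_zero, LinearMap.lsmul_apply] using LinearMap.mem_ker.mp hy
  exact hy0 (by rw [hs (hsy.trans (smul_zero s).symm), map_zero])

theorem Module.Injective.surjective_smul [Module.Injective R M] {s : R}
    (hs : Function.Injective (s • · : M → M)) : Surjective (s • · : M → M) := by
  obtain ⟨h, hh⟩ := Module.Injective.out (LinearMap.lsmul R M s) hs LinearMap.id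
  refine fun x => ⟨h x, ?_⟩
  simpa only [LinearMap.lsmul_apply, map_smul, LinearMap.id_apply] using hh x

theorem isLocalizedModule_id_of_bijective_smul (S : Submonoid R)
    (h : ∀ s ∈ S, Bijective (s • · : M → M)) :
    IsLocalizedModule S (LinearMap.id : M →ₗ[R] M) where
  map_units s := (Module.End.isUnit_iff _).mpr (h s s.2)
  surj x := ⟨⟨x, 1⟩, one_smul _ _⟩
  exists_of_eq hxy := ⟨1, congrArg _ hxy⟩

end

theorem Ideal.Quotient.injective_smul_of_notMem {R : Type*} [CommRing R] (𝔭 : Ideal R)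
    [𝔭.IsPrime] {s : R} (hs : s ∉ 𝔭) : Injective (s • · : R ⧸ 𝔭 → R ⧸ 𝔭) := by
  have hs' : Ideal.Quotient.mk 𝔭 s ≠ 0 := by rwa [Ne, Ideal.Quotient.eq_zero_iff_mem]
  intro x y hxy
  refine mul_left_cancel₀ hs' ?_
  simpa only [Algebra.smul_def, Ideal.Quotient.algebraMap_eq] using hxy

theorem injective_hull_prime_is_module_over_localization_and_localization_bijective_general
    {A : Type u} [CommRing A]
    (𝔭 : Ideal A) [𝔭.IsPrime]
    (E : Type u) [AddCommGroup E] [Module A E]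
    (hinj : Module.Injective A E)
    (ι : (A ⧸ 𝔭) →ₗ[A] E)
    (hmono : Function.Injective ι)
    (hess : ∀ W : Submodule A E, W ≠ ⊥ → LinearMap.range ι ⊓ W ≠ ⊥) :
    (∃ m : Module (Localization.AtPrime 𝔭) E,
      ∀ (a : A) (x : E),
        (letI := m; (algebraMap A (Localization.AtPrime 𝔭) a) • x) = a • x) ∧
    Function.Bijective (LocalizedModule.mkLinearMap 𝔭.primeCompl E) := by
  have hbij (s : A) (hs : s ∈ 𝔭.primeCompl) : Bijective (s • · : E → E) :=
    have hinj_s := injective_smul_of_essential ι hmono hess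
      (Ideal.Quotient.injective_smul_of_notMem 𝔭 hs)
    ⟨hinj_s, hinj.surjective_smul hinj_s⟩
  have := isLocalizedModule_id_of_bijective_smul 𝔭.primeCompl hbij
  refine ⟨⟨IsLocalizedModule.module 𝔭.primeCompl LinearMap.id, fun a x => ?_⟩, ?_⟩
  · let := IsLocalizedModule.module (A := Localization.AtPrime 𝔭) 𝔭.primeCompl
      (LinearMap.id : E →ₗ[A] E)
    have := IsLocalizedModule.isScalarTower_module (A := Localization.AtPrime 𝔭)
      𝔭.primeCompl (LinearMap.id : E →ₗ[A] E)
    exact algebraMap_smul _ a x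
  · convert (IsLocalizedModule.iso 𝔭.primeCompl (LinearMap.id : E →ₗ[A] E)).symm.bijective
    exact funext fun x => (IsLocalizedModule.iso_symm_apply _ _ x).symm

/-- Let `A` be a commutative noetherian ring, `𝔭` a prime ideal and `E` an injective hull of
`A/𝔭`.  Then `E` is naturally a module over the localization `A_𝔭` (compatibly with its
`A`-module structure), and the localization map `E → E_𝔭` is an isomorphism. -/
theorem injective_hull_prime_is_module_over_localization_and_localization_bijective
    {A : Type u} [CommRing A] [IsNoetherianRing A]
    (𝔭 : Ideal A) [𝔭.IsPrime]
    (E : Type u) [AddCommGroup E] [Module A E]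
    (hinj : Module.Injective A E)
    (ι : (A ⧸ 𝔭) →ₗ[A] E)
    (hmono : Function.Injective ι)
    (hess : ∀ W : Submodule A E, W ≠ ⊥ → LinearMap.range ι ⊓ W ≠ ⊥) :
    (∃ m : Module (Localization.AtPrime 𝔭) E,
      ∀ (a : A) (x : E),
        (letI := m; (algebraMap A (Localization.AtPrime 𝔭) a) • x) = a • x) ∧
    Function.Bijective (LocalizedModule.mkLinearMap 𝔭.primeCompl E) :=
  injective_hull_prime_is_module_over_localization_and_localization_bijective_general 𝔭 E hinj ι
    hmono hess
end

section
/- Let A be a commutative noetherian ring. There is a bijection between the set of isomorphism classes of indecomposable injective A-modules and Spec(A), sending 𝔭 to the injective hull E(A/𝔭); moreover every injective A-module is a direct sum of modules of the form E(A/𝔭). -/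
/-!
Every nonzero module over a noetherian ring has an associated prime `𝔭`, i.e. contains a copy of
`A/𝔭`; inside an injective module this copy extends along `A/𝔭 → E(A/𝔭)` to an embedding of
`E(A/𝔭)`, injective because `A/𝔭` is essential in `E(A/𝔭)`. Since `A/𝔭` is a domain, any two
nonzero submodules of `A/𝔭`, hence of `E(A/𝔭)`, meet, so `E(A/𝔭)` is indecomposable; and its only
associated prime is `𝔭`, which recovers `𝔭` from the isomorphism class.

Over a noetherian ring a map from an ideal to a direct sum lands in finitely many summands, so
Baer's criterion shows that direct sums of injectives are injective. Hence a maximal independent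
family of copies of the `E(A/𝔭)` inside an injective module `M` spans a direct summand, and its
complement, being injective and containing no copy of any `E(A/𝔭)`, is zero.
-/

universe u v w

open DirectSum

section Lattice

variable {α : Type*} [CompleteLattice α]

theorem sSupIndep.insert [IsModularLattice α] {T : Set α} {a : α} (hT : sSupIndep T)
    (ha : Disjoint a (sSup T)) : sSupIndep (insert a T) := by
  rintro b (rfl | hbT)
  · exact ha.mono_right (sSup_le_sSup (Set.sdiff_singleton_subset_iff.mpr le_rfl))
  · have hb : Disjoint (b ⊔ sSup (T \ {b})) a :=
      ha.symm.mono_left (sup_le (le_sSup hbT) (sSup_le_sSup Set.sdiff_subset))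
    refine ((hT hbT).disjoint_sup_right_of_disjoint_sup_left hb).mono_right ?_
    rw [sup_comm, ← sSup_insert]
    exact sSup_le_sSup (Set.insert_sdiff_subset ..)

theorem exists_sSupIndep_forall_disjoint_eq_bot [IsModularLattice α] [IsCompactlyGenerated α]
    (P : α → Prop) :
    ∃ T : Set α, (∀ a ∈ T, P a) ∧ sSupIndep T ∧ ∀ a, P a → Disjoint a (sSup T) → a = ⊥ := by
  obtain ⟨T, hT⟩ := zorn_subset {T : Set α | (∀ a ∈ T, P a) ∧ sSupIndep T} fun c hc hchain =>
    ⟨⋃₀ c, ⟨fun a ⟨t, ht, hat⟩ => (hc ht).1 a hat,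
      iSupIndep_sUnion_of_directed hchain.directedOn fun t ht => (hc ht).2⟩,
      fun _ => Set.subset_sUnion_of_mem⟩
  refine ⟨T, hT.prop.1, hT.prop.2, fun a ha hdisj => ?_⟩
  have haT : a ∈ T := hT.mem_of_prop_insert
    ⟨Set.forall_mem_insert.mpr ⟨ha, hT.prop.1⟩, hT.prop.2.insert hdisj⟩
  exact hdisj.eq_bot_of_le (le_sSup haT)

end Lattice

def Submodule.IsEssential {R M : Type*} [Semiring R] [AddCommMonoid M] [Module R M]
    (N : Submodule R M) : Prop :=
  ∀ W : Submodule R M, W ≠ ⊥ → N ⊓ W ≠ ⊥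

def Module.IsUniform (R M : Type*) [Semiring R] [AddCommMonoid M] [Module R M] : Prop :=
  ∀ N N' : Submodule R M, N ≠ ⊥ → N' ≠ ⊥ → N ⊓ N' ≠ ⊥

theorem LinearMap.injective_of_injective_comp_of_isEssential {R M N P : Type*} [Ring R]
    [AddCommGroup M] [Module R M] [AddCommGroup N] [Module R N] [AddCommGroup P] [Module R P]
    {f : N →ₗ[R] M} {g : M →ₗ[R] P} (hgf : Function.Injective (g ∘ₗ f))
    (hess : (LinearMap.range f).IsEssential) : Function.Injective g := by
  rw [← LinearMap.ker_eq_bot]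
  by_contra hker
  apply hess _ hker
  rw [eq_bot_iff]
  rintro _ ⟨⟨x, rfl⟩, hx⟩
  rw [Submodule.mem_bot, hgf.eq_iff' (map_zero _) |>.mp hx, map_zero]

namespace Module.IsUniform

variable {R M : Type*} [Ring R] [AddCommGroup M] [Module R M]

theorem eq_bot_or_eq_bot_of_isCompl (hM : IsUniform R M) {N N' : Submodule R M}
    (h : IsCompl N N') : N = ⊥ ∨ N' = ⊥ := by
  by_contra! hne
  exact hM N N' hne.1 hne.2 h.inf_eq_bot

theorem of_isEssential_range {N : Type*} [AddCommGroup N] [Module R N] (hN : IsUniform R N)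
    {f : N →ₗ[R] M} (hf : Function.Injective f) (hess : (LinearMap.range f).IsEssential) :
    IsUniform R M := by
  have hcomap : ∀ W : Submodule R M, W ≠ ⊥ → W.comap f ≠ ⊥ := fun W hW hcomap =>
    hess W hW (by rw [← Submodule.map_comap_eq, hcomap, Submodule.map_bot])
  intro W W' hW hW' hinf
  apply hN _ _ (hcomap W hW) (hcomap W' hW')
  rw [← Submodule.comap_inf, hinf, Submodule.comap_bot, LinearMap.ker_eq_bot.mpr hf]

end Module.IsUniform

theorem Ideal.Quotient.isUniform {R : Type*} [CommRing R] (p : Ideal R) [p.IsPrime] :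
    Module.IsUniform R (R ⧸ p) := by
  intro N N' hN hN'
  obtain ⟨x, hxN, hx⟩ := Submodule.exists_mem_ne_zero_of_ne_bot hN
  obtain ⟨y, hyN', hy⟩ := Submodule.exists_mem_ne_zero_of_ne_bot hN'
  obtain ⟨b, rfl⟩ := Ideal.Quotient.mk_surjective y
  obtain ⟨a, rfl⟩ := Ideal.Quotient.mk_surjective x
  have hba : b • Ideal.Quotient.mk p a = a • Ideal.Quotient.mk p b := by
    simp only [Algebra.smul_def, Ideal.Quotient.algebraMap_eq, mul_comm]
  refine (Submodule.ne_bot_iff _).mpr ⟨b • Ideal.Quotient.mk p a,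
    ⟨N.smul_mem b hxN, hba ▸ N'.smul_mem a hyN'⟩, ?_⟩
  rw [Algebra.smul_def, Ideal.Quotient.algebraMap_eq]
  exact mul_ne_zero hy hx

theorem Submodule.IsEssential.associatedPrimes_eq {R M N : Type*} [CommRing R]
    [IsNoetherianRing R] [AddCommGroup M] [Module R M] [AddCommGroup N] [Module R N]
    {f : N →ₗ[R] M} (hf : Function.Injective f) (hess : (LinearMap.range f).IsEssential) :
    associatedPrimes R N = associatedPrimes R M := by
  refine (associatedPrimes.subset_of_injective hf).antisymm fun q hq => ?_
  obtain ⟨hprime, x, rfl⟩ := isAssociatedPrime_iff.mp hq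
  have hx : Submodule.span R {x} ≠ ⊥ := by
    rw [Ne, Submodule.span_singleton_eq_bot]
    rintro rfl
    exact hprime.ne_top Submodule.colon_singleton_zero
  obtain ⟨_, ⟨⟨n, rfl⟩, hn⟩, hn0⟩ := Submodule.exists_mem_ne_zero_of_ne_bot (hess _ hx)
  obtain ⟨s, hs⟩ := Submodule.mem_span_singleton.mp hn
  have hsx : s ∉ (⊥ : Submodule R M).colon {x} := by
    rw [Submodule.mem_colon_singleton, Submodule.mem_bot, hs]
    exact hn0
  -- `f n = s • x` with `s ∉ ann x`, so primality of `ann x` gives `ann n = ann x`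
  refine isAssociatedPrime_iff.mpr ⟨hprime, n, Ideal.ext fun r => ?_⟩
  calc r ∈ (⊥ : Submodule R M).colon {x} ↔ r * s ∈ (⊥ : Submodule R M).colon {x} :=
        (Ideal.IsPrime.mul_mem_right_iff hsx).symm
    _ ↔ r ∈ (⊥ : Submodule R N).colon {n} := by
        simp only [Submodule.mem_colon_singleton, Submodule.mem_bot, mul_smul, hs, ← map_smul,
          map_eq_zero_iff f hf]

theorem iSupIndep.exists_injective_range_eq_iSup {R M ι : Type*} [Ring R] [AddCommGroup M]
    [Module R M] {p : ι → Submodule R M} (hp : iSupIndep p) {F : ι → Type*}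
    [∀ i, AddCommMonoid (F i)] [∀ i, Module R (F i)] (e : ∀ i, F i ≃ₗ[R] p i) :
    ∃ Φ : (⨁ i, F i) →ₗ[R] M, Function.Injective Φ ∧ LinearMap.range Φ = ⨆ i, p i := by
  classical
  let e' : (⨁ i, F i) ≃ₗ[R] Π₀ i, p i := DFinsupp.mapRange.linearEquiv e
  refine ⟨DFinsupp.lsum ℕ (fun i => (p i).subtype) ∘ₗ e'.toLinearMap, ?_, ?_⟩
  · exact hp.dfinsupp_lsum_injective.comp e'.injective
  · rw [LinearMap.range_comp_of_range_eq_top _ e'.range, Submodule.iSup_eq_range_dfinsupp_lsum]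

theorem DirectSum.exists_finset_apply_eq_zero {R ι N : Type*} [Semiring R] {F : ι → Type*}
    [∀ i, AddCommMonoid (F i)] [∀ i, Module R (F i)] [AddCommMonoid N] [Module R N]
    [Module.Finite R N] (g : N →ₗ[R] ⨁ i, F i) : ∃ s : Finset ι, ∀ x, ∀ i ∉ s, g x i = 0 := by
  classical
  have hcompact : IsCompactElement (LinearMap.range g) :=
    (Submodule.fg_iff_compact _).mp (Submodule.fg_range g)
  obtain ⟨s, hs⟩ := CompleteLattice.IsCompactElement.exists_finset_of_le_iSup _ hcompact _
    (DFinsupp.iSup_range_lsingle (R := R) (M := F) ▸ le_top)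
  refine ⟨s, fun x i hi => ?_⟩
  have hle : ⨆ j ∈ s, LinearMap.range (DFinsupp.lsingle (R := R) (M := F) j) ≤
      LinearMap.ker (DFinsupp.lapply i) := by
    refine iSup₂_le fun j hj => ?_
    rintro _ ⟨z, rfl⟩
    exact DFinsupp.single_eq_of_ne (ne_of_mem_of_not_mem hj hi).symm
  exact hle (hs ⟨x, rfl⟩)

namespace Module.Injective

variable {R : Type u} [Ring R]

theorem isComplemented_range {Q : Type v} [AddCommGroup Q] [Module R Q] [Small.{v} R]
    [Module.Injective R Q] {M : Type w} [AddCommGroup M] [Module R M]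
    {g : Q →ₗ[R] M} (hg : Function.Injective g) : IsComplemented (LinearMap.range g) := by
  obtain ⟨r, hr⟩ := Module.Injective.extension_property R Q Q M g hg LinearMap.id
  refine ⟨_, LinearMap.isCompl_of_proj (f := g.rangeRestrict ∘ₗ r) ?_⟩
  rintro ⟨_, q, rfl⟩
  ext
  simp [← LinearMap.comp_apply r g, hr]

theorem of_isCompl {M : Type v} [AddCommGroup M] [Module R M] [Module.Injective R M]
    {N N' : Submodule R M} (h : IsCompl N N') : Module.Injective R N where
  out X Y _ _ _ _ f hf g := by
    obtain ⟨e, he⟩ := Module.Injective.out f hf (N.subtype ∘ₗ g)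
    exact ⟨N.projectionOnto N' h ∘ₗ e, fun x => by
      simp [he, Submodule.projectionOnto_apply_left]⟩

theorem directSum_s8 [IsNoetherianRing R] [Small.{v} R] {ι : Type w} (F : ι → Type v)
    [∀ i, AddCommGroup (F i)] [∀ i, Module R (F i)] [∀ i, Module.Injective R (F i)] :
    Module.Injective R (⨁ i, F i) := by
  classical
  refine Module.Baer.injective fun I g => ?_
  obtain ⟨s, hs⟩ := DirectSum.exists_finset_apply_eq_zero g
  choose k hk using fun i => Module.Baer.of_injective inferInstance I (DFinsupp.lapply i ∘ₗ g)
  refine ⟨LinearMap.toSpanSingleton R _ (DFinsupp.mk s fun i => k i 1), fun r hr => ?_⟩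
  ext i
  rw [LinearMap.toSpanSingleton_apply, DFinsupp.smul_apply, DFinsupp.mk_apply]
  split_ifs with hi
  · rw [← map_smul, smul_eq_mul, mul_one, hk i r hr]
    rfl
  · rw [smul_zero, hs _ i hi]

end Module.Injective

section InjectiveHull

variable {A : Type u} [CommRing A]

theorem isUniform_of_isEssential_range {p : Ideal A} [p.IsPrime] {E : Type v} [AddCommGroup E]
    [Module A E] {ι : (A ⧸ p) →ₗ[A] E} (hι : Function.Injective ι)
    (hess : (LinearMap.range ι).IsEssential) : Module.IsUniform A E :=
  (Ideal.Quotient.isUniform p).of_isEssential_range hι hess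

theorem associatedPrimes_eq_singleton_of_isEssential_range [IsNoetherianRing A] {p : Ideal A}
    [hp : p.IsPrime] {E : Type v} [AddCommGroup E] [Module A E] {ι : (A ⧸ p) →ₗ[A] E}
    (hι : Function.Injective ι) (hess : (LinearMap.range ι).IsEssential) :
    associatedPrimes A E = {p} := by
  rw [← hess.associatedPrimes_eq hι, associatedPrimes.eq_singleton_of_isPrimary hp.isPrimary,
    hp.radical]

variable [IsNoetherianRing A] [Small.{v} A] {E : PrimeSpectrum A → Type v}
  [∀ p, AddCommGroup (E p)] [∀ p, Module A (E p)]

theorem exists_injective_linearMap_of_injective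
    {ι : ∀ p : PrimeSpectrum A, (A ⧸ p.asIdeal) →ₗ[A] E p} (hι : ∀ p, Function.Injective (ι p))
    (hess : ∀ p, (LinearMap.range (ι p)).IsEssential) (M : Type v) [AddCommGroup M] [Module A M]
    [Module.Injective A M] [Nontrivial M] :
    ∃ (p : PrimeSpectrum A) (g : E p →ₗ[A] M), Function.Injective g := by
  obtain ⟨q, hq⟩ := associatedPrimes.nonempty A M
  obtain ⟨hprime, f, hf⟩ := (isAssociatedPrime_iff_exists_injective_linearMap q M).mp hq
  obtain ⟨g, hg⟩ := Module.Injective.extension_property A M _ _ (ι ⟨q, hprime⟩) (hι _) f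
  exact ⟨⟨q, hprime⟩, g,
    LinearMap.injective_of_injective_comp_of_isEssential (hg ▸ hf) (hess _)⟩

theorem exists_linearEquiv_of_indecomposable
    {ι : ∀ p : PrimeSpectrum A, (A ⧸ p.asIdeal) →ₗ[A] E p} (hι : ∀ p, Function.Injective (ι p))
    (hess : ∀ p, (LinearMap.range (ι p)).IsEssential) [∀ p, Module.Injective A (E p)]
    (M : Type v) [AddCommGroup M] [Module A M] [Module.Injective A M] [Nontrivial M]
    (hM : ∀ N N' : Submodule A M, IsCompl N N' → N = ⊥ ∨ N' = ⊥) :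
    ∃ p, Nonempty (M ≃ₗ[A] E p) := by
  obtain ⟨p, g, hg⟩ := exists_injective_linearMap_of_injective hι hess M
  obtain ⟨N', hc⟩ := Module.Injective.isComplemented_range hg
  have : Nontrivial (E p) := (hι p).nontrivial
  have hN' : N' = ⊥ :=
    (hM _ _ hc).resolve_left (LinearMap.range_eq_bot.not.mpr (LinearMap.ne_zero_of_injective hg))
  have hg_surj : LinearMap.range g = ⊤ := eq_top_of_isCompl_bot (hN' ▸ hc)
  exact ⟨p, ⟨(LinearEquiv.ofBijective g ⟨hg, LinearMap.range_eq_top.mp hg_surj⟩).symm⟩⟩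

theorem exists_linearEquiv_directSum
    {ι : ∀ p : PrimeSpectrum A, (A ⧸ p.asIdeal) →ₗ[A] E p} (hι : ∀ p, Function.Injective (ι p))
    (hess : ∀ p, (LinearMap.range (ι p)).IsEssential) [∀ p, Module.Injective A (E p)]
    (M : Type v) [AddCommGroup M] [Module A M] [Module.Injective A M] :
    ∃ (J : Type v) (f : J → PrimeSpectrum A), Nonempty (M ≃ₗ[A] ⨁ j : J, E (f j)) := by
  obtain ⟨T, hTE, hT, hTmax⟩ := exists_sSupIndep_forall_disjoint_eq_bot
    fun W : Submodule A M => ∃ p, Nonempty (W ≃ₗ[A] E p)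
  choose f e using fun W : T => hTE W.1 W.2
  obtain ⟨Φ, hΦ, hΦ_range⟩ := ((sSupIndep_iff T).mp hT).exists_injective_range_eq_iSup
    fun W => (e W).some.symm
  rw [← sSup_eq_iSup'] at hΦ_range
  have := Module.Injective.directSum_s8 (R := A) fun W : T => E (f W)
  obtain ⟨N', hc⟩ := Module.Injective.isComplemented_range hΦ
  have hN' : N' = ⊥ := by
    by_contra hN'
    have : Nontrivial N' := Submodule.nontrivial_iff_ne_bot.mpr hN'
    have : Module.Injective A N' := Module.Injective.of_isCompl hc.symm
    obtain ⟨p, g, hg⟩ := exists_injective_linearMap_of_injective hι hess N'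
    have : Nontrivial (E p) := (hι p).nontrivial
    have hg' : Function.Injective (N'.subtype ∘ₗ g) := N'.injective_subtype.comp hg
    have hdisj : Disjoint (LinearMap.range (N'.subtype ∘ₗ g)) (sSup T) :=
      hΦ_range ▸ hc.symm.disjoint.mono_left
        ((LinearMap.range_comp_le_range _ _).trans N'.range_subtype.le)
    exact LinearMap.range_eq_bot.not.mpr (LinearMap.ne_zero_of_injective hg')
      (hTmax _ ⟨p, ⟨(LinearEquiv.ofInjective _ hg').symm⟩⟩ hdisj)
  have hΦ_surj : LinearMap.range Φ = ⊤ := eq_top_of_isCompl_bot (hN' ▸ hc)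
  exact ⟨T, f, ⟨(LinearEquiv.ofBijective Φ ⟨hΦ, LinearMap.range_eq_top.mp hΦ_surj⟩).symm⟩⟩

end InjectiveHull

/-- Matlis' classification of injective modules over a commutative noetherian ring `A`:
given, for each prime `𝔭`, an injective hull `E 𝔭` of `A/𝔭` (an injective module
containing `A/𝔭` as an essential submodule), then:
* each `E 𝔭` is an indecomposable injective module;
* `E 𝔭 ≅ E 𝔮` implies `𝔭 = 𝔮` (so `𝔭 ↦ E 𝔭` is a bijection between `Spec A` and the
  isomorphism classes of indecomposable injective `A`-modules);
* every indecomposable injective `A`-module is isomorphic to some `E 𝔭`;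
* every injective `A`-module is a direct sum of modules of the form `E 𝔭`. -/
theorem matlis_classification_of_injectives
    {A : Type u} [CommRing A] [IsNoetherianRing A]
    (E : PrimeSpectrum A → Type u) [∀ p, AddCommGroup (E p)] [∀ p, Module A (E p)]
    (hinj : ∀ p, Module.Injective A (E p))
    (ι : ∀ p : PrimeSpectrum A, (A ⧸ p.asIdeal) →ₗ[A] E p)
    (hmono : ∀ p, Function.Injective (ι p))
    (hess : ∀ p (W : Submodule A (E p)), W ≠ ⊥ → LinearMap.range (ι p) ⊓ W ≠ ⊥) :
    (∀ p, Nontrivial (E p) ∧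
      ∀ N N' : Submodule A (E p), IsCompl N N' → N = ⊥ ∨ N' = ⊥) ∧
    (∀ p q, Nonempty (E p ≃ₗ[A] E q) → p = q) ∧
    (∀ (M : Type u) [AddCommGroup M] [Module A M], Module.Injective A M →
      (Nontrivial M ∧ ∀ N N' : Submodule A M, IsCompl N N' → N = ⊥ ∨ N' = ⊥) →
      ∃ p, Nonempty (M ≃ₗ[A] E p)) ∧
    (∀ (M : Type u) [AddCommGroup M] [Module A M], Module.Injective A M →
      ∃ (J : Type u) (f : J → PrimeSpectrum A), Nonempty (M ≃ₗ[A] ⨁ j : J, E (f j))) := by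
  refine ⟨fun p => ⟨(hmono p).nontrivial, fun N N' =>
      (isUniform_of_isEssential_range (hmono p) (hess p)).eq_bot_or_eq_bot_of_isCompl⟩,
    fun p q ⟨e⟩ => ?_, fun M _ _ _ ⟨_, hM⟩ => exists_linearEquiv_of_indecomposable hmono hess M hM,
    fun M _ _ _ => exists_linearEquiv_directSum hmono hess M⟩
  have hpq : ({p.asIdeal} : Set (Ideal A)) = {q.asIdeal} := by
    rw [← associatedPrimes_eq_singleton_of_isEssential_range (hmono p) (hess p),
      ← associatedPrimes_eq_singleton_of_isEssential_range (hmono q) (hess q),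
      LinearEquiv.AssociatedPrimes.eq e]
  exact PrimeSpectrum.ext (Set.singleton_injective hpq)
end

section
/- The endomorphism ring of an indecomposable injective module over any ring is a local ring. -/
universe u

section Aux

variable {A : Type u} [Ring A] {I : Type u} [AddCommGroup I] [Module A I]

/-- Elementwise essentiality: `N` is essential in `M`. -/
def EssIn (N M : Submodule A I) : Prop :=
  N ≤ M ∧ ∀ x ∈ M, x ≠ 0 → ∃ a : A, a • x ∈ N ∧ a • x ≠ 0

theorem essIn_refl (N : Submodule A I) : EssIn N N :=
  ⟨le_rfl, fun x hx hx0 => ⟨1, by simpa using hx, by simpa using hx0⟩⟩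

theorem essIn_trans {N M P : Submodule A I} (h1 : EssIn N M) (h2 : EssIn M P) : EssIn N P := by
  refine ⟨h1.1.trans h2.1, fun x hx hx0 => ?_⟩
  obtain ⟨a, haM, ha0⟩ := h2.2 x hx hx0
  obtain ⟨b, hbN, hb0⟩ := h1.2 _ haM ha0
  exact ⟨b * a, by simpa [mul_smul] using hbN, by simpa [mul_smul] using hb0⟩

/-- Every nonzero submodule of an indecomposable injective module is essential. -/
theorem essIn_top (hinj : Module.Injective A I)
    (hind : ∀ N N' : Submodule A I, IsCompl N N' → N = ⊥ ∨ N' = ⊥)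
    (N : Submodule A I) (hN : N ≠ ⊥) : EssIn N ⊤ := by
  classical
  -- Zorn: maximal essential extension M of N inside I
  obtain ⟨M, hNM, hMess, hMmax⟩ :
      ∃ M : Submodule A I, N ≤ M ∧ EssIn N M ∧ ∀ M', EssIn N M' → M ≤ M' → M' = M := by
    have hchain : ∀ c ⊆ {M : Submodule A I | EssIn N M}, IsChain (· ≤ ·) c → ∀ y ∈ c,
        ∃ ub ∈ {M : Submodule A I | EssIn N M}, ∀ z ∈ c, z ≤ ub := by
      intro c hcS hc y hy
      refine ⟨sSup c, ⟨(hcS hy).1.trans (le_sSup hy), fun x hx hx0 => ?_⟩,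
        fun z hz => le_sSup hz⟩
      obtain ⟨M', hM'c, hxM'⟩ :=
        (Submodule.mem_sSup_of_directed ⟨y, hy⟩ hc.directedOn).1 hx
      exact (hcS hM'c).2 x hxM' hx0
    obtain ⟨M, hxM, hMs, hMmax⟩ :=
      zorn_le_nonempty₀ {M : Submodule A I | EssIn N M} hchain N (essIn_refl N)
    exact ⟨M, hMs.1, hMs, fun M' hM' hMM' => le_antisymm (hMmax hM' hMM') hMM'⟩
  -- Zorn: a complement C of M
  obtain ⟨C, hCM, hCmax⟩ :
      ∃ C : Submodule A I, C ⊓ M = ⊥ ∧ ∀ D, D ⊓ M = ⊥ → C ≤ D → D = C := by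
    have hchain : ∀ c ⊆ {C : Submodule A I | C ⊓ M = ⊥}, IsChain (· ≤ ·) c → ∀ y ∈ c,
        ∃ ub ∈ {C : Submodule A I | C ⊓ M = ⊥}, ∀ z ∈ c, z ≤ ub := by
      intro c hcS hc y hy
      refine ⟨sSup c, ?_, fun z hz => le_sSup hz⟩
      rw [Set.mem_setOf_eq, eq_bot_iff]
      rintro x ⟨hx1, hx2⟩
      obtain ⟨C', hC'c, hxC'⟩ :=
        (Submodule.mem_sSup_of_directed ⟨y, hy⟩ hc.directedOn).1 hx1
      have hmem : x ∈ C' ⊓ M := ⟨hxC', hx2⟩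
      rw [hcS hC'c] at hmem
      exact hmem
    obtain ⟨C, _, hCs, hCmax⟩ :=
      zorn_le_nonempty₀ {C : Submodule A I | C ⊓ M = ⊥} hchain ⊥ (by simp)
    exact ⟨C, hCs, fun D hD hCD => le_antisymm (hCmax hD hCD) hCD⟩
  -- the map M → I ⧸ C is injective
  have hMC : Function.Injective ((C.mkQ).comp M.subtype) := by
    rw [← LinearMap.ker_eq_bot, eq_bot_iff]
    rintro ⟨x, hxM⟩ hx
    have hxC : x ∈ C := by
      simpa [Submodule.Quotient.mk_eq_zero] using hx
    have : x ∈ C ⊓ M := ⟨hxC, hxM⟩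
    rw [hCM] at this
    simpa using this
  -- extend the inclusion M → I along M → I ⧸ C
  obtain ⟨g, hg⟩ := hinj.out ((C.mkQ).comp M.subtype) hMC M.subtype
  set p : I →ₗ[A] I := g.comp C.mkQ with hp
  have hpM : ∀ x ∈ M, p x = x := fun x hx => hg ⟨x, hx⟩
  have hpC : ∀ x ∈ C, p x = 0 := by
    intro x hx
    simp [hp, (Submodule.Quotient.mk_eq_zero C).2 hx]
  -- M is essential in range p
  have hMrange : M ≤ LinearMap.range p := fun x hx => ⟨x, hpM x hx⟩
  have hess : EssIn M (LinearMap.range p) := by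
    refine ⟨hMrange, fun x hx hx0 => ?_⟩
    obtain ⟨y, rfl⟩ := hx
    by_contra hcon
    push_neg at hcon
    -- D = C ⊔ span y still meets M trivially, so y ∈ C, so p y = 0
    have hD : (C ⊔ Submodule.span A {y}) ⊓ M = ⊥ := by
      rw [eq_bot_iff]
      rintro m ⟨hm1, hm2⟩
      obtain ⟨c, hc, z, hz, rfl⟩ := Submodule.mem_sup.1 hm1
      obtain ⟨a, rfl⟩ := Submodule.mem_span_singleton.1 hz
      have hpm : c + a • y = a • p y := by
        conv_lhs => rw [← hpM _ hm2]
        rw [map_add, hpC c hc, map_smul, zero_add]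
      have hz0 := hcon a (by rw [← hpm]; exact hm2)
      rw [hz0] at hpm
      simp [Submodule.mem_bot, hpm]
    have hyC : y ∈ C := by
      have := hCmax _ hD le_sup_left
      rw [← this]
      exact Submodule.mem_sup_right (Submodule.mem_span_singleton_self y)
    exact hx0 (hpC y hyC)
  -- by maximality, range p = M
  have hrange : LinearMap.range p = M :=
    hMmax _ (essIn_trans hMess hess) hMrange
  -- p is idempotent
  have hidem : ∀ x, p (p x) = p x := fun x =>
    hpM (p x) (hrange ▸ LinearMap.mem_range_self p x)
  -- IsCompl (range p) (ker p)
  have hcompl : IsCompl (LinearMap.range p) (LinearMap.ker p) := by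
    constructor
    · rw [disjoint_iff, eq_bot_iff]
      rintro x ⟨⟨y, rfl⟩, hx2⟩
      have : p (p y) = 0 := hx2
      rw [hidem] at this
      simp [this]
    · rw [codisjoint_iff, eq_top_iff]
      intro x _
      have : x = p x + (x - p x) := by abel
      refine this ▸ Submodule.add_mem_sup (LinearMap.mem_range_self p x) ?_
      simp [LinearMap.mem_ker, map_sub, hidem]
  -- indecomposability: ker p = ⊥, so p = id, so M = ⊤
  rcases hind _ _ hcompl with h | h
  · have hMbot : M = ⊥ := by rw [← hrange, h]
    exact absurd (le_bot_iff.1 (hMbot ▸ hNM)) hN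
  · have hpid : ∀ x, p x = x := by
      intro x
      have hpx : p (p x - x) = 0 := by rw [map_sub, hidem, sub_self]
      have hx : p x - x ∈ LinearMap.ker p := hpx
      rw [h] at hx
      exact sub_eq_zero.1 ((Submodule.mem_bot A).1 hx)
    have hMtop : M = ⊤ := by
      rw [← hrange, eq_top_iff]
      exact fun x _ => ⟨x, hpid x⟩
    exact hMtop ▸ hMess

end Aux

/-- The endomorphism ring of an indecomposable injective module over any ring is a local
ring. -/
theorem endomorphism_ring_of_indecomposable_injective_isLocalRing
    {A : Type u} [Ring A] (I : Type u) [AddCommGroup I] [Module A I]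
    (hinj : Module.Injective A I) (hne : Nontrivial I)
    (hind : ∀ N N' : Submodule A I, IsCompl N N' → N = ⊥ ∨ N' = ⊥) :
    IsLocalRing (Module.End A I) := by
  classical
  -- injective endomorphisms are units
  have hunit : ∀ f : Module.End A I, LinearMap.ker f = ⊥ → IsUnit f := by
    intro f hf
    have hfi : Function.Injective f := LinearMap.ker_eq_bot.1 hf
    obtain ⟨h, hh⟩ := hinj.out (f : I →ₗ[A] I) hfi LinearMap.id
    -- IsCompl (range f) (ker h)
    have hcompl : IsCompl (LinearMap.range f) (LinearMap.ker h) := by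
      constructor
      · rw [disjoint_iff, eq_bot_iff]
        rintro x ⟨⟨y, rfl⟩, hx2⟩
        have hy : h (f y) = 0 := hx2
        rw [hh] at hy
        have hy0 : y = 0 := by simpa using hy
        simp [hy0]
      · rw [codisjoint_iff, eq_top_iff]
        intro x _
        have : x = f (h x) + (x - f (h x)) := by abel
        refine this ▸ Submodule.add_mem_sup (LinearMap.mem_range_self f _) ?_
        have : h (x - f (h x)) = 0 := by rw [map_sub, hh]; simp
        exact this
    rcases hind _ _ hcompl with h1 | h1
    · obtain ⟨x, hx⟩ := exists_ne (0 : I)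
      exact absurd ((Submodule.mem_bot A).1 (h1 ▸ LinearMap.mem_range_self f x))
        (fun e => hx (hfi (by simpa using e)))
    · have hsurj : LinearMap.range f = ⊤ := by
        have := hcompl.sup_eq_top
        rwa [h1, sup_bot_eq] at this
      exact (Module.End.isUnit_iff f).2 ⟨hfi, LinearMap.range_eq_top.1 hsurj⟩
  have : Nontrivial (Module.End A I) := by
    obtain ⟨x, hx⟩ := exists_ne (0 : I)
    exact ⟨1, 0, fun e => hx (by simpa using LinearMap.congr_fun e x)⟩
  refine { toNontrivial := this, isUnit_or_isUnit_of_add_one := ?_ }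
  intro f g hfg
  have hgf : g = 1 - f := by rw [← hfg]; abel
  subst hgf
  by_cases hf : LinearMap.ker f = ⊥
  · exact Or.inl (hunit f hf)
  by_cases hg : LinearMap.ker (1 - f) = ⊥
  · exact Or.inr (hunit _ hg)
  -- both kernels nonzero: contradiction with essentiality
  exfalso
  obtain ⟨x, hxf, hx0⟩ := Submodule.exists_mem_ne_zero_of_ne_bot hf
  have hess := essIn_top hinj hind (LinearMap.ker f) hf
  obtain ⟨y, hyg, hy0⟩ := Submodule.exists_mem_ne_zero_of_ne_bot hg
  obtain ⟨a, haK, ha0⟩ := hess.2 y trivial hy0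
  -- a • y ∈ ker f; also a • y ∈ ker (1 - f)
  have h1 : f (a • y) = 0 := haK
  have h2 : (1 - f) (a • y) = 0 := by
    have hy' : (1 - f) y = 0 := hyg
    rw [map_smul, hy', smul_zero]
  have h3 : a • y = 0 := by
    rw [LinearMap.sub_apply, Module.End.one_apply, h1, sub_zero] at h2
    exact h2
  exact ha0 h3
end

section
/- Let A be a commutative noetherian local ring with maximal ideal 𝔪 and residue field k, and let E be the injective hull of k. Then E is an injective cogenerator of the category of 𝔪-power-torsion A-modules: for every nonzero A-module N with Γ_𝔪(N) = N, one has Hom_A(N, E) ≠ 0. -/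
universe u

/-- Let `(A, 𝔪, k)` be a commutative noetherian local ring and `E` an injective hull of the
residue field `k`.  Then `E` is an injective cogenerator of the category of `𝔪`-power
torsion `A`-modules: every nonzero `𝔪`-power torsion module admits a nonzero homomorphism
to `E`. -/
theorem injective_hull_residueField_cogenerates_torsion_modules
    {A : Type u} [CommRing A] [IsNoetherianRing A] [IsLocalRing A]
    (E : Type u) [AddCommGroup E] [Module A E]
    (hinj : Module.Injective A E)
    (ι : IsLocalRing.ResidueField A →ₗ[A] E)
    (hmono : Function.Injective ι)
    (hess : ∀ W : Submodule A E, W ≠ ⊥ → LinearMap.range ι ⊓ W ≠ ⊥)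
    (N : Type u) [AddCommGroup N] [Module A N] [Nontrivial N]
    (htors : ∀ x : N, ∃ n : ℕ, ∀ r ∈ (IsLocalRing.maximalIdeal A) ^ n, r • x = 0) :
    ∃ f : N →ₗ[A] E, f ≠ 0 := by
  classical
  obtain ⟨x, hx⟩ := exists_ne (0 : N)
  set 𝔪 := IsLocalRing.maximalIdeal A with h𝔪
  have hex : ∃ n : ℕ, ∀ r ∈ 𝔪 ^ n, r • x = 0 := htors x
  have hmspec : ∀ r ∈ 𝔪 ^ Nat.find hex, r • x = 0 := Nat.find_spec hex
  have hm0 : Nat.find hex ≠ 0 := by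
    intro h
    apply hx
    have h1 : (1 : A) ∈ 𝔪 ^ Nat.find hex := by
      rw [h, pow_zero, Ideal.one_eq_top]; exact Submodule.mem_top
    simpa using hmspec 1 h1
  obtain ⟨m', hm'⟩ := Nat.exists_eq_succ_of_ne_zero hm0
  rw [hm'] at hmspec
  have hlt : ¬ ∀ r ∈ 𝔪 ^ m', r • x = 0 := Nat.find_min hex (by omega)
  push_neg at hlt
  obtain ⟨r, hr, hry⟩ := hlt
  set y := r • x with hy
  have hyne : y ≠ 0 := hry
  have hann : ∀ s ∈ 𝔪, s • y = 0 := by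
    intro s hs
    have : r * s ∈ 𝔪 ^ (m' + 1) := by
      rw [pow_succ]
      exact Ideal.mul_mem_mul hr hs
    have := hmspec (r * s) this
    rw [hy, smul_smul, mul_comm]
    exact this
  -- the map k = A/𝔪 → N, ā ↦ a • y
  have hle : 𝔪 ≤ LinearMap.ker (LinearMap.toSpanSingleton A N y) := by
    intro s hs
    simpa [LinearMap.mem_ker] using hann s hs
  let i : IsLocalRing.ResidueField A →ₗ[A] N :=
    Submodule.liftQ 𝔪 (LinearMap.toSpanSingleton A N y) hle
  have hi : Function.Injective i := by
    rw [← LinearMap.ker_eq_bot]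
    apply Submodule.ker_liftQ_eq_bot
    intro a ha
    by_contra hna
    have hu : IsUnit a := not_not.mp hna
    rw [LinearMap.mem_ker, LinearMap.toSpanSingleton_apply] at ha
    have h2 : (↑hu.unit⁻¹ : A) • a • y = 0 := by rw [ha, smul_zero]
    rw [smul_smul, IsUnit.val_inv_mul, one_smul] at h2
    exact hyne h2
  obtain ⟨g, hg⟩ := hinj.out i hi ι
  refine ⟨g, fun h => ?_⟩
  have h1 : (IsLocalRing.residue A 1 : IsLocalRing.ResidueField A) ≠ 0 := by
    simp only [map_one]
    exact one_ne_zero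
  have := hg (IsLocalRing.residue A 1)
  rw [h] at this
  simp only [LinearMap.zero_apply] at this
  exact h1 (hmono (by simpa using this.symm))
end
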